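/- arXiv:1405.1784 — 3 statements merged into one kernel-verified Lean document; each statement's English description precedes it below -/
import Mathlib

section
/- Let $\delta \in (0,1)$ and let $k \geq 1$ be an integer. Then there exists a constant $C_\delta > 0$, independent of $k$, such that $\sum_{j \geq 1, j \neq k} \frac{1}{(j^2 - k^2)^2} \leq \frac{C_\delta^2}{k^{1-\delta}}$. -/
theorem stmt_4 (δ : ℝ) (hδ : δ ∈ Set.Ioo (0:ℝ) 1) :
    ∃ C : ℝ, 0 < C ∧ ∀ k : ℕ, 1 ≤ k →
      (∑' j : ℕ, if 1 ≤ j ∧ j ≠ k then 1 / ((j:ℝ)^2 - (k:ℝ)^2)^2 else 0)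
        ≤ C^2 / (k:ℝ) ^ (1 - δ) := by
  obtain ⟨hδ0, hδ1⟩ := hδ
  have hSsum : Summable (fun n : ℕ => 1 / (n:ℝ)^2) :=
    Real.summable_one_div_nat_pow.mpr one_lt_two
  set S := ∑' n : ℕ, 1 / (n:ℝ)^2 with hSdef
  have hS0 : 0 ≤ S := tsum_nonneg fun n => by positivity
  refine ⟨Real.sqrt (2*S+1), Real.sqrt_pos.mpr (by linarith), fun k hk => ?_⟩
  rw [Real.sq_sqrt (by linarith : (0:ℝ) ≤ 2*S+1)]
  have hk1 : (1:ℝ) ≤ (k:ℝ) := by exact_mod_cast hk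
  have hkpos : (0:ℝ) < (k:ℝ) := by linarith
  -- the comparison function
  set d : ℕ → ℝ := fun j => if j ≠ k then 1 / ((j:ℝ) - (k:ℝ))^2 else 0 with hd
  have hd_nonneg : ∀ j, 0 ≤ d j := fun j => by
    simp only [hd]; split <;> positivity
  have hshift : ∀ n : ℕ, d (n + (k+1)) = 1 / ((n:ℝ)+1)^2 := by
    intro n
    have : n + (k+1) ≠ k := by omega
    simp only [hd, this, if_pos, ne_eq, not_false_iff]
    push_cast
    ring_nf
  have hdsum : Summable d := by
    rw [← summable_nat_add_iff (k+1)]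
    apply Summable.congr ((summable_nat_add_iff 1).mpr hSsum)
    intro n
    rw [hshift n]
    push_cast
    ring_nf
  have htail : ∑' n : ℕ, d (n + (k+1)) ≤ S := by
    have h1 : S = ∑ i ∈ Finset.range 1, 1/(i:ℝ)^2 + ∑' n : ℕ, 1/((n+1:ℕ):ℝ)^2 :=
      (Summable.sum_add_tsum_nat_add 1 hSsum).symm
    have h2 : ∑ i ∈ Finset.range 1, 1/(i:ℝ)^2 = 0 := by norm_num
    rw [h1, h2, zero_add]
    apply le_of_eq
    apply tsum_congr
    intro n
    rw [hshift n]
    push_cast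
    ring_nf
  have hfin : ∑ j ∈ Finset.range (k+1), d j ≤ S := by
    have : ∑ j ∈ Finset.range (k+1), d j = ∑ j ∈ Finset.range (k+1), 1/(j:ℝ)^2 := by
      rw [← Finset.sum_range_reflect (fun j => 1/(j:ℝ)^2) (k+1)]
      apply Finset.sum_congr rfl
      intro j hj
      simp only [Finset.mem_range] at hj
      have hjk : j ≤ k := by omega
      rcases eq_or_ne j k with h | h
      · simp [hd, h]
      · have : j ≠ k := h
        simp only [hd, this, if_pos, ne_eq, not_false_iff]
        have : ((k + 1 - 1 - j : ℕ) : ℝ) = (k:ℝ) - (j:ℝ) := by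
          push_cast [Nat.cast_sub hjk]
          ring_nf
        rw [this]
        congr 1
        ring
    rw [this]
    exact Summable.sum_le_tsum _ (fun i _ => by positivity) hSsum
  have hdtsum : ∑' j, d j ≤ 2 * S := by
    rw [← Summable.sum_add_tsum_nat_add (k+1) hdsum]
    linarith
  -- termwise comparison
  have hcmp : ∀ j : ℕ, (if 1 ≤ j ∧ j ≠ k then 1 / ((j:ℝ)^2 - (k:ℝ)^2)^2 else 0)
      ≤ (1/(k:ℝ)^2) * d j := by
    intro j
    by_cases hc : 1 ≤ j ∧ j ≠ k
    · rw [if_pos hc]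
      have hjk : j ≠ k := hc.2
      simp only [hd, hjk, if_pos, ne_eq, not_false_iff]
      rw [div_mul_div_comm, one_mul]
      apply one_div_le_one_div_of_le
      · have : (j:ℝ) - k ≠ 0 := by
          intro h
          apply hjk
          exact_mod_cast sub_eq_zero.mp h
        positivity
      · have h1 : ((j:ℝ)^2 - (k:ℝ)^2)^2 = ((j:ℝ)-k)^2 * ((j:ℝ)+k)^2 := by ring
        rw [h1]
        have hjpos : (0:ℝ) ≤ (j:ℝ) := Nat.cast_nonneg j
        have h2 : (k:ℝ)^2 ≤ ((j:ℝ)+k)^2 := by nlinarith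
        nlinarith [sq_nonneg ((j:ℝ)-(k:ℝ))]
    · rw [if_neg hc]
      have := hd_nonneg j
      positivity
  have hfsum : Summable (fun j : ℕ => if 1 ≤ j ∧ j ≠ k then 1 / ((j:ℝ)^2 - (k:ℝ)^2)^2 else 0) := by
    apply Summable.of_nonneg_of_le (fun j => by split <;> positivity) hcmp
    exact hdsum.mul_left _
  calc (∑' j : ℕ, if 1 ≤ j ∧ j ≠ k then 1 / ((j:ℝ)^2 - (k:ℝ)^2)^2 else 0)
      ≤ ∑' j, (1/(k:ℝ)^2) * d j := Summable.tsum_le_tsum hcmp hfsum (hdsum.mul_left _)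
    _ = (1/(k:ℝ)^2) * ∑' j, d j := tsum_mul_left
    _ ≤ (1/(k:ℝ)^2) * (2*S) := by
        apply mul_le_mul_of_nonneg_left hdtsum (by positivity)
    _ = (2*S) / (k:ℝ)^2 := by ring
    _ ≤ (2*S+1) / (k:ℝ)^(1-δ) := by
        apply div_le_div₀ (by linarith) (by linarith) (Real.rpow_pos_of_pos hkpos _)
        calc (k:ℝ)^(1-δ) ≤ (k:ℝ)^(2:ℝ) :=
              Real.rpow_le_rpow_of_exponent_le hk1 (by linarith)
          _ = (k:ℝ)^2 := by rw [Real.rpow_two]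
end

section
/- Let $W : [0, 2\pi] \to \mathbb{C}$ be continuous with $W(0) = W(2\pi)$, let $\lambda, \widetilde a \in \mathbb{R}$ with $\lambda > \widetilde a$, and suppose $W$ satisfies $-iW'(\theta) + 2\sqrt{\lambda - \widetilde a}\, W(\theta) + W(\theta)^2 = \widetilde a - a(\theta)$ on $[0,2\pi]$, where $a : [0,2\pi] \to \mathbb{R}$ is continuous with $\frac{1}{2\pi}\int_0^{2\pi}a = \widetilde a$, and $\|W\|_{L^\infty} \leq \frac{C}{\sqrt{\lambda - \widetilde a}}$. Then $\big|\int_0^{2\pi} W(\theta)\,d\theta\big| \leq \frac{\pi C^2}{(\lambda - \widetilde a)^{3/2}}$. -/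
open Real intervalIntegral

theorem stmt_12 (W W' : ℝ → ℂ) (a : ℝ → ℝ) (lam atilde C : ℝ)
    (hlam : atilde < lam)
    (hWc : ContinuousOn W (Set.Icc 0 (2*π)))
    (hWper : W 0 = W (2*π))
    (hW' : ∀ θ ∈ Set.Icc (0:ℝ) (2*π), HasDerivAt W (W' θ) θ)
    (ha : ContinuousOn a (Set.Icc 0 (2*π)))
    (hmean : (1/(2*π)) * ∫ θ in (0:ℝ)..(2*π), a θ = atilde)
    (heq : ∀ θ ∈ Set.Icc (0:ℝ) (2*π),
      -Complex.I * W' θ + 2 * (Real.sqrt (lam - atilde) : ℂ) * W θ + (W θ)^2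
        = ((atilde - a θ : ℝ) : ℂ))
    (hbound : ∀ θ ∈ Set.Icc (0:ℝ) (2*π), ‖W θ‖ ≤ C / Real.sqrt (lam - atilde)) :
    ‖∫ θ in (0:ℝ)..(2*π), W θ‖ ≤ π * C^2 / (Real.sqrt (lam - atilde))^3 := by
  set s := Real.sqrt (lam - atilde) with hs_def
  have hs : 0 < s := Real.sqrt_pos.mpr (by linarith)
  have h2π : (0:ℝ) ≤ 2*π := by positivity
  have huIcc : Set.uIcc (0:ℝ) (2*π) = Set.Icc 0 (2*π) := Set.uIcc_of_le h2π
  -- express W' as a continuous function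
  have hW'eq : ∀ θ ∈ Set.Icc (0:ℝ) (2*π),
      W' θ = Complex.I * (((atilde - a θ : ℝ) : ℂ) - 2 * (s:ℂ) * W θ - (W θ)^2) := by
    intro θ hθ
    linear_combination Complex.I * heq θ hθ + (W' θ) * Complex.I_sq
  have hW'c : ContinuousOn W' (Set.Icc 0 (2*π)) := by
    have hc : ContinuousOn
        (fun θ => Complex.I * (((atilde - a θ : ℝ) : ℂ) - 2 * (s:ℂ) * W θ - (W θ)^2))
        (Set.Icc 0 (2*π)) := by fun_prop
    exact hc.congr hW'eq
  have hWint : IntervalIntegrable W MeasureTheory.volume 0 (2*π) :=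
    ContinuousOn.intervalIntegrable (by rw [huIcc]; exact hWc)
  have hW2int : IntervalIntegrable (fun θ => (W θ)^2) MeasureTheory.volume 0 (2*π) :=
    ContinuousOn.intervalIntegrable (by rw [huIcc]; exact hWc.pow 2)
  have hW'int : IntervalIntegrable W' MeasureTheory.volume 0 (2*π) :=
    ContinuousOn.intervalIntegrable (by rw [huIcc]; exact hW'c)
  have haint : IntervalIntegrable (fun θ => ((atilde - a θ : ℝ) : ℂ)) MeasureTheory.volume 0 (2*π) := by
    apply ContinuousOn.intervalIntegrable
    rw [huIcc]
    fun_prop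
  have hftc : ∫ θ in (0:ℝ)..(2*π), W' θ = W (2*π) - W 0 :=
    intervalIntegral.integral_eq_sub_of_hasDerivAt
      (fun θ hθ => hW' θ (by rwa [huIcc] at hθ)) hW'int
  -- integrate the equation
  have hintcongr : ∫ θ in (0:ℝ)..(2*π),
      (-Complex.I * W' θ + 2 * (s:ℂ) * W θ + (W θ)^2)
      = ∫ θ in (0:ℝ)..(2*π), ((atilde - a θ : ℝ) : ℂ) := by
    apply intervalIntegral.integral_congr
    intro θ hθ
    exact heq θ (by rwa [huIcc] at hθ)
  have hsplit : ∫ θ in (0:ℝ)..(2*π),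
      (-Complex.I * W' θ + 2 * (s:ℂ) * W θ + (W θ)^2)
      = -Complex.I * (∫ θ in (0:ℝ)..(2*π), W' θ)
        + 2 * (s:ℂ) * (∫ θ in (0:ℝ)..(2*π), W θ)
        + ∫ θ in (0:ℝ)..(2*π), (W θ)^2 := by
    rw [intervalIntegral.integral_add (((hW'int.const_mul _)).add (hWint.const_mul _)) hW2int,
        intervalIntegral.integral_add (hW'int.const_mul _) (hWint.const_mul _),
        intervalIntegral.integral_const_mul, intervalIntegral.integral_const_mul]
  have hrhs : ∫ θ in (0:ℝ)..(2*π), ((atilde - a θ : ℝ) : ℂ) = 0 := by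
    have hπ : (2*π) ≠ 0 := by positivity
    have hI : ∫ θ in (0:ℝ)..(2*π), a θ = 2*π*atilde := by
      field_simp at hmean; linarith
    have : ∫ θ in (0:ℝ)..(2*π), (atilde - a θ) = 0 := by
      rw [intervalIntegral.integral_sub intervalIntegrable_const
          (ContinuousOn.intervalIntegrable (by rw [huIcc]; exact ha)), hI]
      simp
    rw [intervalIntegral.integral_ofReal, this]
    simp
  have hkey : 2 * (s:ℂ) * (∫ θ in (0:ℝ)..(2*π), W θ) = - ∫ θ in (0:ℝ)..(2*π), (W θ)^2 := by
    have h := hintcongr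
    rw [hsplit, hrhs, hftc, ← hWper] at h
    simp at h
    linear_combination h
  -- bound the square integral
  have hC : 0 ≤ C / s := le_trans (norm_nonneg _) (hbound 0 (by constructor <;> [rfl; linarith]))
  have hnorm2 : ‖∫ θ in (0:ℝ)..(2*π), (W θ)^2‖ ≤ (C/s)^2 * (2*π) := by
    have habs : |2*π - 0| = 2*π := by rw [abs_of_nonneg (by linarith)]; ring
    calc ‖∫ θ in (0:ℝ)..(2*π), (W θ)^2‖ ≤ (C/s)^2 * |2*π - 0| := by
          apply intervalIntegral.norm_integral_le_of_norm_le_const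
          intro θ hθ
          rw [Set.uIoc_of_le h2π] at hθ
          have hθ' : θ ∈ Set.Icc (0:ℝ) (2*π) := ⟨le_of_lt hθ.1, hθ.2⟩
          rw [norm_pow]
          exact pow_le_pow_left₀ (norm_nonneg _) (hbound θ hθ') 2
      _ = (C/s)^2 * (2*π) := by rw [habs]
  have hnormW : 2 * s * ‖∫ θ in (0:ℝ)..(2*π), W θ‖ ≤ (C/s)^2 * (2*π) := by
    calc 2 * s * ‖∫ θ in (0:ℝ)..(2*π), W θ‖
        = ‖2 * (s:ℂ) * (∫ θ in (0:ℝ)..(2*π), W θ)‖ := by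
          rw [norm_mul, norm_mul]
          simp [abs_of_pos hs]
      _ = ‖∫ θ in (0:ℝ)..(2*π), (W θ)^2‖ := by rw [hkey, norm_neg]
      _ ≤ (C/s)^2 * (2*π) := by linarith [hnorm2]
  have hgoal : ‖∫ θ in (0:ℝ)..(2*π), W θ‖ ≤ (C/s)^2 * (2*π) / (2*s) := by
    rw [le_div_iff₀ (by positivity)]
    linarith [hnormW]
  calc ‖∫ θ in (0:ℝ)..(2*π), W θ‖ ≤ (C/s)^2 * (2*π) / (2*s) := hgoal
    _ = π * C^2 / s^3 := by field_simp
end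

section
/- Let $S : [0, 2\pi] \to \mathbb{C}$ be a $C^2$ function satisfying $-iS''(\theta) + (S'(\theta))^2 = \lambda - a(\theta)$ on $[0, 2\pi]$, where $a : [0,2\pi] \to \mathbb{R}$ is continuous and $\lambda \in \mathbb{R}$, with boundary conditions $S'(0) = S'(2\pi)$ and $S(0) = 0$. Write $\eta = \mathrm{Re}\, S$, $\xi = \mathrm{Im}\, S$. Then $\eta'' = 2\eta'\xi'$ on $[0,2\pi]$, hence $\eta'(\theta) = \eta'(0)e^{2\xi(\theta) - 2\xi(0)}$; and if $\eta'(0) \neq 0$ then $\xi(2\pi) = \xi(0) = 0$, so that $S(2\pi) \in \mathbb{R}$. -/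
open Real

/-!
Since `λ - a` is real, the imaginary part of the equation is `η'' = 2 η' ξ'`, a linear first-order
equation for `η'`; hence `η' e^{-2ξ}` is constant. At `θ = 2π` the periodicity `S'(2π) = S'(0)`
gives `η'(0) = η'(0) e^{2ξ(2π) - 2ξ(0)}`, and `ξ(0) = 0` because `S(0) = 0`, so `ξ(2π) = 0`
as soon as `η'(0) ≠ 0`.
-/

open Set

lemma HasDerivAt.complex_re {f : ℝ → ℂ} {f' : ℂ} {x : ℝ} (h : HasDerivAt f f' x) :
    HasDerivAt (fun t => (f t).re) f'.re x :=
  Complex.reCLM.hasFDerivAt.comp_hasDerivAt x h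

lemma HasDerivAt.complex_im {f : ℝ → ℂ} {f' : ℂ} {x : ℝ} (h : HasDerivAt f f' x) :
    HasDerivAt (fun t => (f t).im) f'.im x :=
  Complex.imCLM.hasFDerivAt.comp_hasDerivAt x h

lemma deriv_complex_re {f : ℝ → ℂ} (hf : Differentiable ℝ f) :
    deriv (fun t => (f t).re) = fun t => (deriv f t).re :=
  funext fun t => (hf t).hasDerivAt.complex_re.deriv

lemma deriv_complex_im {f : ℝ → ℂ} (hf : Differentiable ℝ f) :
    deriv (fun t => (f t).im) = fun t => (deriv f t).im :=
  funext fun t => (hf t).hasDerivAt.complex_im.deriv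

lemma re_eq_of_neg_I_mul_add_sq_eq_ofReal {w z : ℂ} {r : ℝ} (h : -Complex.I * w + z ^ 2 = r) :
    w.re = 2 * z.re * z.im := by
  have him := congrArg Complex.im h
  simp only [Complex.add_im, Complex.mul_im, Complex.neg_re, Complex.neg_im, Complex.I_re,
    Complex.I_im, sq, Complex.ofReal_im] at him
  linarith

lemma eq_mul_exp_sub_of_hasDerivAt_mul {f g g' : ℝ → ℝ} {a b : ℝ}
    (hf : ∀ t ∈ Icc a b, HasDerivAt f (f t * g' t) t)
    (hg : ∀ t ∈ Icc a b, HasDerivAt g (g' t) t) :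
    ∀ t ∈ Icc a b, f t = f a * exp (g t - g a) := by
  have hderiv : ∀ t ∈ Icc a b, HasDerivAt (fun s => f s * exp (-g s)) 0 t := fun t ht =>
    ((hf t ht).mul (hg t ht).fun_neg.exp).congr_deriv (by ring)
  have hconst := constant_of_has_deriv_right_zero
    (fun t ht => (hderiv t ht).continuousAt.continuousWithinAt)
    (fun t ht => (hderiv t (Ico_subset_Icc_self ht)).hasDerivWithinAt)
  intro t ht
  calc f t = f t * exp (-g t) * exp (g t) := by rw [mul_assoc, ← exp_add]; simp
    _ = f a * exp (-g a) * exp (g t) := by rw [hconst t ht]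
    _ = f a * exp (g t - g a) := by rw [mul_assoc, ← exp_add, neg_add_eq_sub]

theorem stmt_13_general (S : ℝ → ℂ) (a : ℝ → ℝ) (lam : ℝ)
    (hS : ContDiff ℝ 2 S)
    (heq : ∀ θ ∈ Set.Icc (0:ℝ) (2*π),
      -Complex.I * deriv (deriv S) θ + (deriv S θ)^2 = ((lam - a θ : ℝ) : ℂ))
    (hbc : deriv S 0 = deriv S (2*π)) (h0 : S 0 = 0) :
    (∀ θ ∈ Set.Icc (0:ℝ) (2*π),
      deriv (deriv (fun t => (S t).re)) θ
        = 2 * deriv (fun t => (S t).re) θ * deriv (fun t => (S t).im) θ) ∧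
    (∀ θ ∈ Set.Icc (0:ℝ) (2*π),
      deriv (fun t => (S t).re) θ
        = deriv (fun t => (S t).re) 0 * Real.exp (2*(S θ).im - 2*(S 0).im)) ∧
    (deriv (fun t => (S t).re) 0 ≠ 0 →
      (S (2*π)).im = 0 ∧ (S 0).im = 0 ∧ (S (2*π)).im = 0) := by
  have hS1 : Differentiable ℝ S := hS.differentiable two_ne_zero
  have hS2 : Differentiable ℝ (deriv S) := hS.differentiable_deriv_two
  have hη'' : ∀ θ ∈ Icc (0:ℝ) (2*π), (deriv (deriv S) θ).re = 2 * (deriv S θ).re * (deriv S θ).im :=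
    fun θ hθ => re_eq_of_neg_I_mul_add_sq_eq_ofReal (heq θ hθ)
  have hη' : ∀ θ ∈ Icc (0:ℝ) (2*π),
      (deriv S θ).re = (deriv S 0).re * exp (2 * (S θ).im - 2 * (S 0).im) :=
    eq_mul_exp_sub_of_hasDerivAt_mul (g := fun t => 2 * (S t).im)
      (fun t ht => (hS2 t).hasDerivAt.complex_re.congr_deriv (by rw [hη'' t ht]; ring))
      (fun t _ => (hS1 t).hasDerivAt.complex_im.const_mul 2)
  simp only [deriv_complex_re hS1, deriv_complex_im hS1, deriv_complex_re hS2]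
  refine ⟨hη'', hη', fun hne => ?_⟩
  have hξ0 : (S 0).im = 0 := by simp [h0]
  have hexp : exp (2 * (S (2*π)).im - 2 * (S 0).im) = 1 := by
    have h2π := hη' (2*π) (right_mem_Icc.mpr (by positivity))
    rw [← hbc] at h2π
    exact (mul_eq_left₀ hne).mp h2π.symm
  have hξ2π : (S (2*π)).im = 0 := by
    rw [exp_eq_one_iff, hξ0] at hexp
    linarith
  exact ⟨hξ2π, hξ0, hξ2π⟩

theorem stmt_13 (S : ℝ → ℂ) (a : ℝ → ℝ) (lam : ℝ)
    (hS : ContDiff ℝ 2 S) (ha : Continuous a)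
    (heq : ∀ θ ∈ Set.Icc (0:ℝ) (2*π),
      -Complex.I * deriv (deriv S) θ + (deriv S θ)^2 = ((lam - a θ : ℝ) : ℂ))
    (hbc : deriv S 0 = deriv S (2*π)) (h0 : S 0 = 0) :
    (∀ θ ∈ Set.Icc (0:ℝ) (2*π),
      deriv (deriv (fun t => (S t).re)) θ
        = 2 * deriv (fun t => (S t).re) θ * deriv (fun t => (S t).im) θ) ∧
    (∀ θ ∈ Set.Icc (0:ℝ) (2*π),
      deriv (fun t => (S t).re) θ
        = deriv (fun t => (S t).re) 0 * Real.exp (2*(S θ).im - 2*(S 0).im)) ∧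
    (deriv (fun t => (S t).re) 0 ≠ 0 →
      (S (2*π)).im = 0 ∧ (S 0).im = 0 ∧ (S (2*π)).im = 0) :=
  stmt_13_general S a lam hS heq hbc h0
end
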